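/- arXiv:1412.2490 — 4 statements merged into one kernel-verified Lean document; each statement's English description precedes it below -/
import Mathlib

section
/- Let G be a finite group, f a 2-cocycle on G with values in ℂ*, and a, b commuting elements of G. If u_a and u_b are the corresponding basis elements of the twisted group algebra ℂ^f G normalized so that u_g^{ord(g)} = 1 for each g, and u_a u_b = λ u_b u_a for a scalar λ ∈ ℂ*, then λ is a root of unity whose order divides gcd(ord(a), ord(b)). -/
/-!
Iterating `u_a u_b = λ u_b u_a` gives `u_a ^ k u_b = λ ^ k u_b u_a ^ k` and
`u_a u_b ^ k = λ ^ k u_b ^ k u_a`. Taking `k = ord a`, resp. `k = ord b`, the normalization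
turns these into `u_b = λ ^ ord(a) u_b` and `u_a = λ ^ ord(b) u_a`, so `λ ^ ord(a) = λ ^ ord(b) = 1`.
-/

/-- A 2-cocycle on `G` with values in `ℂ*`. -/
def IsCocycle {G : Type*} [Group G] (f : G → G → ℂˣ) : Prop :=
  ∀ x y z : G, f x y * f (x * y) z = f y z * f x (y * z)

section ScalarCommute

variable {R A : Type*} [CommRing R] [Ring A] [Algebra R A] {x y : A} {c : R}

theorem pow_mul_eq_smul_mul_pow (h : x * y = c • (y * x)) (k : ℕ) :
    x ^ k * y = c ^ k • (y * x ^ k) := by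
  induction k with
  | zero => simp
  | succ k ih =>
    calc x ^ (k + 1) * y = x * (x ^ k * y) := by rw [pow_succ', mul_assoc]
      _ = c ^ k • ((x * y) * x ^ k) := by rw [ih, mul_smul_comm, mul_assoc]
      _ = c ^ (k + 1) • (y * x ^ (k + 1)) := by
        rw [h, smul_mul_assoc, smul_smul, mul_assoc, ← pow_succ', ← pow_succ]

theorem mul_pow_eq_smul_pow_mul (h : x * y = c • (y * x)) (k : ℕ) :
    x * y ^ k = c ^ k • (y ^ k * x) := by
  have hop : MulOpposite.op y * MulOpposite.op x = c • (MulOpposite.op x * MulOpposite.op y) := by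
    rw [← MulOpposite.op_mul, ← MulOpposite.op_mul, h, MulOpposite.op_smul]
  simpa only [← MulOpposite.op_pow, ← MulOpposite.op_mul, ← MulOpposite.op_smul,
    MulOpposite.op_inj] using pow_mul_eq_smul_mul_pow hop k

variable [IsCancelMulZero R] [Module.IsTorsionFree R A]

theorem pow_eq_one_of_mul_eq_smul_of_pow_left_eq_one (h : x * y = c • (y * x)) (hy : y ≠ 0)
    {n : ℕ} (hx : x ^ n = 1) : c ^ n = 1 :=
  smul_left_injective R hy <| by
    simpa only [hx, one_mul, mul_one, one_smul] using (pow_mul_eq_smul_mul_pow h n).symm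

theorem pow_eq_one_of_mul_eq_smul_of_pow_right_eq_one (h : x * y = c • (y * x)) (hx : x ≠ 0)
    {n : ℕ} (hy : y ^ n = 1) : c ^ n = 1 :=
  smul_left_injective R hx <| by
    simpa only [hy, one_mul, mul_one, one_smul] using (mul_pow_eq_smul_pow_mul h n).symm

end ScalarCommute

theorem scalar_commutator_root_of_unity_general {G : Type*} [Group G]
    {A : Type*} [Ring A] [Algebra ℂ A] [Nontrivial A]
    (u : G → Aˣ)
    (hnorm : ∀ g : G, (u g : A) ^ orderOf g = 1)
    {a b : G} (lam : ℂ)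
    (hcomm : (u a : A) * (u b : A) = lam • ((u b : A) * (u a : A))) :
    lam ^ Nat.gcd (orderOf a) (orderOf b) = 1 :=
  pow_gcd_eq_one.mpr
    ⟨pow_eq_one_of_mul_eq_smul_of_pow_left_eq_one hcomm (u b).ne_zero (hnorm a),
      pow_eq_one_of_mul_eq_smul_of_pow_right_eq_one hcomm (u a).ne_zero (hnorm b)⟩

/-- Let `G` be a finite group, `f` a 2-cocycle on `G` with values in `ℂ*`, and `a, b`
commuting elements of `G`.  If `u_g` are the basis elements of the twisted group algebra
`ℂ^f G` (realized as units of a nontrivial `ℂ`-algebra `A` with `u_x u_y = f(x,y) u_{xy}`),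
normalized so that `u_g ^ ord(g) = 1` for each `g`, and `u_a u_b = λ u_b u_a` for a scalar
`λ ∈ ℂ*`, then `λ` is a root of unity whose order divides `gcd(ord a, ord b)`. -/
theorem scalar_commutator_root_of_unity {G : Type*} [Group G] [Finite G]
    (f : G → G → ℂˣ) (hf : IsCocycle f)
    {A : Type*} [Ring A] [Algebra ℂ A] [Nontrivial A]
    (u : G → Aˣ)
    (hu : ∀ x y : G, (u x : A) * (u y : A) = (f x y : ℂ) • (u (x * y) : A))
    (hnorm : ∀ g : G, (u g : A) ^ orderOf g = 1)
    {a b : G} (hab : Commute a b) (lam : ℂ) (hlam : lam ≠ 0)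
    (hcomm : (u a : A) * (u b : A) = lam • ((u b : A) * (u a : A))) :
    lam ^ Nat.gcd (orderOf a) (orderOf b) = 1 :=
  scalar_commutator_root_of_unity_general u hnorm lam hcomm
end

section
/- Let G be the group of order p^4 (p an odd prime) generated by a, b, c with relations a^{p²} = b^p = c^p = 1, [a,b] = [b,c] = 1, [a,c] = b. Then for every 2-cocycle f ∈ Z²(G, ℂ*) (normalized so u_g^{ord(g)} = 1), the element a^p is f-regular; in particular G is not of central type. -/
/-- An element `g` is `f`-regular if `α_f(g,x) = f(g,x)/f(x,g) = 1` for all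
`x` in the centralizer of `g`. -/
def IsFRegular {G : Type*} [Group G] (f : G → G → ℂˣ) (g : G) : Prop :=
  ∀ x ∈ Subgroup.centralizer ({g} : Set G), f g x = f x g

/-- A 2-cocycle is nondegenerate if `1` is the only `f`-regular element. -/
def IsNondegenerate {G : Type*} [Group G] (f : G → G → ℂˣ) : Prop :=
  ∀ g : G, IsFRegular f g → g = 1

/-- A group is of central type if it admits a nondegenerate 2-cocycle. -/
def IsCentralType (G : Type*) [Group G] : Prop :=
  ∃ f : G → G → ℂˣ, IsCocycle f ∧ IsNondegenerate f

/-!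
Work in the central extension of `G` by `ℂˣ` defined by `f`, with `u_x = (1, x)`; then
`f (g, x) = f (x, g)` says exactly that `u_g` and `u_x` commute. Conjugation by `u_a` fixes `u_b`
and sends `u_c` to `u_b u_c`, up to central scalars `w` and `t`. Iterating, conjugation by
`u_a ^ p` multiplies `u_b` by `w ^ p` and sends `u_c` to `t ^ p w ^ (p choose 2) u_b ^ p u_c`.
As `b ^ p = 1`, `u_b ^ p` is central, which forces `w ^ p = 1`, and `p ∣ p choose 2` since `p` is
odd. The same computation with the roles of `a` and `c` exchanged, using that `u_c ^ p` is
central, gives `t ^ p u_b ^ p = 1`. So `u_a ^ p` centralizes `u_a, u_b, u_c`, hence every `u_x`.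
-/

section CentralConjugation

variable {E : Type*} [Group E] {g x y r s : E}

theorem conj_eq_self_of_mem_center (hs : s ∈ Subgroup.center E) (g : E) :
    MulAut.conj g s = s := by
  rw [MulAut.conj_apply, ← (hs.comm g).eq, mul_inv_cancel_right]

theorem commute_of_conj_eq_self (h : MulAut.conj g y = y) : Commute g y :=
  mul_inv_eq_iff_eq_mul.mp h

theorem conj_pow_eq_pow_mul (hs : s ∈ Subgroup.center E) (hy : MulAut.conj g y = s * y)
    (k : ℕ) : MulAut.conj (g ^ k) y = s ^ k * y := by
  induction k with
  | zero => simp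
  | succ k ih =>
    rw [pow_succ', map_mul, MulAut.mul_apply, ih, map_mul, map_pow,
      conj_eq_self_of_mem_center hs, hy, pow_succ, mul_assoc]

theorem pow_eq_one_of_conj_eq_mul (hs : s ∈ Subgroup.center E) (hy : MulAut.conj g y = s * y)
    {n : ℕ} (hgy : Commute g (y ^ n)) : s ^ n = 1 := by
  have h : MulAut.conj g (y ^ n) = y ^ n := by
    rw [MulAut.conj_apply, hgy.eq, mul_inv_cancel_right]
  rwa [map_pow, hy, (hs.comm y).mul_pow, mul_eq_right] at h

theorem conj_pow_eq_pow_mul_pow_mul (hr : r ∈ Subgroup.center E) (hs : s ∈ Subgroup.center E)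
    (hy : MulAut.conj g y = s * y) (hx : MulAut.conj g x = r * y * x) (k : ℕ) :
    MulAut.conj (g ^ k) x = r ^ k * s ^ k.choose 2 * y ^ k * x := by
  induction k with
  | zero => simp
  | succ k ih =>
    have hchoose : (k + 1).choose 2 = k.choose 2 + k := by
      rw [Nat.choose_succ_succ, Nat.choose_one_right, add_comm]
    calc MulAut.conj (g ^ (k + 1)) x
        = r ^ k * s ^ k.choose 2 * (s ^ k * y ^ k) * (r * y * x) := by
          rw [pow_succ', map_mul, MulAut.mul_apply, ih]
          simp only [map_mul, map_pow, conj_eq_self_of_mem_center hr,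
            conj_eq_self_of_mem_center hs, hy, hx, (hs.comm y).mul_pow]
      _ = r ^ k * (r * (s ^ k.choose 2 * (s ^ k * y ^ k))) * (y * x) := by
          rw [(hr.comm (s ^ k.choose 2 * (s ^ k * y ^ k))).eq]; simp only [mul_assoc]
      _ = r ^ (k + 1) * s ^ (k + 1).choose 2 * y ^ (k + 1) * x := by
          rw [hchoose, pow_succ r, pow_add s, pow_succ y]; simp only [mul_assoc]

theorem conj_pow_eq_of_odd {n : ℕ} (hn : Odd n) (hr : r ∈ Subgroup.center E)
    (hs : s ∈ Subgroup.center E) (hy : MulAut.conj g y = s * y)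
    (hx : MulAut.conj g x = r * y * x) (hgy : Commute g (y ^ n)) :
    MulAut.conj (g ^ n) x = r ^ n * y ^ n * x := by
  obtain ⟨m, hchoose⟩ : n ∣ n.choose 2 := by
    obtain ⟨m, rfl⟩ := hn
    exact ⟨m, by rw [Nat.choose_two_right, Nat.add_sub_cancel, mul_left_comm,
      Nat.mul_div_cancel_left _ two_pos]⟩
  rw [conj_pow_eq_pow_mul_pow_mul hr hs hy hx, hchoose, pow_mul,
    pow_eq_one_of_conj_eq_mul hs hy hgy, one_pow, mul_one]

theorem conj_eq_inv_mul_inv_mul (hr : r ∈ Subgroup.center E) (hx : MulAut.conj g x = r * y * x) :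
    MulAut.conj x g = r⁻¹ * y⁻¹ * g := by
  rw [MulAut.conj_apply, mul_inv_eq_iff_eq_mul]
  rw [MulAut.conj_apply, mul_inv_eq_iff_eq_mul] at hx
  calc x * g = y⁻¹ * r⁻¹ * (r * y * x * g) := by group
    _ = r⁻¹ * y⁻¹ * g * x := by rw [← hx, ((inv_mem hr).comm _).eq]; group

theorem commute_pow_of_odd {n : ℕ} (hn : Odd n) {v : E} (hr : r ∈ Subgroup.center E)
    (hs : s ∈ Subgroup.center E) (hv : v ∈ Subgroup.center E) (hy : MulAut.conj g y = s * y)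
    (hx : MulAut.conj g x = r * y * x) (hxy : MulAut.conj x y = v * y)
    (hxn : x ^ n ∈ Subgroup.center E) (hyn : y ^ n ∈ Subgroup.center E) :
    Commute (g ^ n) x ∧ Commute (g ^ n) y := by
  have hxy' : MulAut.conj x y⁻¹ = v⁻¹ * y⁻¹ := by
    rw [map_inv, hxy, mul_inv_rev, ((inv_mem hv).comm _).eq]
  have hrn : r ^ n * y ^ n = 1 := by
    have h := conj_pow_eq_of_odd hn (inv_mem hr) (inv_mem hv) hxy'
      (conj_eq_inv_mul_inv_mul hr hx) (inv_pow y n ▸ ((inv_mem hyn).comm x).symm)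
    rwa [MulAut.conj_apply, (hxn.comm g).eq, mul_inv_cancel_right, right_eq_mul, inv_pow,
      inv_pow, ← mul_inv_rev, inv_eq_one, ← ((pow_mem hr n).comm _).eq] at h
  constructor
  · refine commute_of_conj_eq_self ?_
    rw [conj_pow_eq_of_odd hn hr hs hy hx ((hyn.comm g).symm), hrn, one_mul]
  · refine commute_of_conj_eq_self ?_
    rw [conj_pow_eq_pow_mul hs hy, pow_eq_one_of_conj_eq_mul hs hy (hyn.comm g).symm, one_mul]

end CentralConjugation

namespace IsCocycle

variable {G : Type*} [Group G] {f : G → G → ℂˣ}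

theorem apply_one_left (hf : IsCocycle f) (x : G) : f 1 x = f 1 1 := by
  simpa using (hf 1 1 x).symm

theorem apply_one_right (hf : IsCocycle f) (x : G) : f x 1 = f 1 1 := by
  simpa using hf x 1 1

end IsCocycle

/-- The central extension of `G` by `ℂˣ` classified by `f`; `lift x = ⟨1, x⟩` is the basis
element `u_x` of the twisted group algebra `ℂ^f G`. -/
@[ext]
structure CocycleExtension {G : Type*} [Group G] (f : G → G → ℂˣ) where
  scalar : ℂˣ
  elem : G

namespace CocycleExtension

variable {G : Type*} [Group G] {f : G → G → ℂˣ}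

instance : Mul (CocycleExtension f) :=
  ⟨fun e e' => ⟨e.scalar * e'.scalar * f e.elem e'.elem, e.elem * e'.elem⟩⟩

instance : One (CocycleExtension f) := ⟨⟨(f 1 1)⁻¹, 1⟩⟩

instance : Inv (CocycleExtension f) :=
  ⟨fun e => ⟨(e.scalar * f e.elem⁻¹ e.elem * f 1 1)⁻¹, e.elem⁻¹⟩⟩

@[simp] theorem mul_scalar (e e' : CocycleExtension f) :
    (e * e').scalar = e.scalar * e'.scalar * f e.elem e'.elem := rfl
@[simp] theorem mul_elem (e e' : CocycleExtension f) : (e * e').elem = e.elem * e'.elem := rfl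
@[simp] theorem one_scalar : (1 : CocycleExtension f).scalar = (f 1 1)⁻¹ := rfl
@[simp] theorem one_elem : (1 : CocycleExtension f).elem = 1 := rfl
@[simp] theorem inv_scalar (e : CocycleExtension f) :
    e⁻¹.scalar = (e.scalar * f e.elem⁻¹ e.elem * f 1 1)⁻¹ := rfl
@[simp] theorem inv_elem (e : CocycleExtension f) : e⁻¹.elem = e.elem⁻¹ := rfl

def lift (x : G) : CocycleExtension f := ⟨1, x⟩

theorem lift_mul_lift_scalar (x y : G) : (lift (f := f) x * lift y).scalar = f x y := by
  simp [lift]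

theorem apply_eq_of_commute_lift {x y : G} (h : Commute (lift (f := f) x) (lift y)) :
    f x y = f y x := by
  rw [← lift_mul_lift_scalar (f := f) x y, h.eq, lift_mul_lift_scalar]

variable [hf : Fact (IsCocycle f)]

instance : Group (CocycleExtension f) :=
  Group.ofLeftAxioms
    (fun e₁ e₂ e₃ => by
      have h := hf.out e₁.elem e₂.elem e₃.elem
      ext : 1
      · simp only [mul_scalar, mul_elem]
        grind
      · exact mul_assoc _ _ _)
    (fun e => by ext : 1 <;> simp [hf.out.apply_one_left])
    (fun e => by
      ext : 1
      · simp only [mul_scalar, inv_scalar, inv_elem, one_scalar]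
        group
      · exact inv_mul_cancel _)

def proj : CocycleExtension f →* G where
  toFun := elem
  map_one' := rfl
  map_mul' _ _ := rfl

theorem proj_apply (e : CocycleExtension f) : proj e = e.elem := rfl

@[simp] theorem proj_lift (x : G) : proj (lift (f := f) x) = x := rfl

theorem mem_center_of_proj_eq_one {e : CocycleExtension f} (h : proj e = 1) :
    e ∈ Subgroup.center (CocycleExtension f) :=
  Subgroup.mem_center_iff.mpr fun e' => by
    rw [proj_apply] at h
    ext : 1
    · simp only [mul_scalar, h, hf.out.apply_one_left, hf.out.apply_one_right]
      rw [mul_comm e'.scalar]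
    · simp only [mul_elem, h, mul_one, one_mul]

theorem exists_mem_center_mul_eq {e e' : CocycleExtension f} (h : proj e = proj e') :
    ∃ z ∈ Subgroup.center (CocycleExtension f), e = z * e' :=
  ⟨e * e'⁻¹, mem_center_of_proj_eq_one (by rw [map_mul, map_inv, h, mul_inv_cancel]),
    (inv_mul_cancel_right e e').symm⟩

theorem commute_lift_of_closure_eq_top {S : Set G} (hS : Subgroup.closure S = ⊤)
    {e : CocycleExtension f} (he : ∀ x ∈ S, Commute e (lift x)) (x : G) :
    Commute e (lift x) := by
  have hx : x ∈ (Subgroup.centralizer {e}).map proj := by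
    refine (Subgroup.closure_le _).mpr (fun y hy => ?_) (hS ▸ Subgroup.mem_top x)
    exact ⟨lift y, Subgroup.mem_centralizer_singleton_iff.mpr (he y hy).eq.symm, proj_lift y⟩
  obtain ⟨e', he', hproj⟩ := hx
  obtain ⟨z, hz, hlift⟩ :=
    exists_mem_center_mul_eq (e := lift x) (e' := e') (by rw [hproj, proj_lift])
  rw [hlift]
  exact (hz.comm e).symm.mul_right (Subgroup.mem_centralizer_singleton_iff.mp he').symm

end CocycleExtension

open CocycleExtension in
theorem IsCocycle.apply_pow_eq_of_odd {n : ℕ} (hn : Odd n) {G : Type*} [Group G] {a b c : G}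
    (hgen : Subgroup.closure ({a, b, c} : Set G) = ⊤) (hb : b ^ n = 1) (hc : c ^ n = 1)
    (hab : Commute a b) (hbc : Commute b c) (hac : a * c * a⁻¹ * c⁻¹ = b)
    {f : G → G → ℂˣ} (hf : IsCocycle f) (x : G) : f (a ^ n) x = f x (a ^ n) := by
  have : Fact (IsCocycle f) := ⟨hf⟩
  obtain ⟨w, hw, hconj_ab⟩ := exists_mem_center_mul_eq
    (e := MulAut.conj (lift (f := f) a) (lift b)) (e' := lift b) (by simp [hab.eq])
  obtain ⟨t, ht, hconj_ac⟩ := exists_mem_center_mul_eq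
    (e := MulAut.conj (lift (f := f) a) (lift c)) (e' := lift b * lift c) (by simp [← hac])
  obtain ⟨v, hv, hconj_cb⟩ := exists_mem_center_mul_eq
    (e := MulAut.conj (lift (f := f) c) (lift b)) (e' := lift b) (by simp [← hbc.eq])
  rw [← mul_assoc] at hconj_ac
  obtain ⟨hac_n, hab_n⟩ := commute_pow_of_odd hn ht hw hv hconj_ab hconj_ac hconj_cb
    (mem_center_of_proj_eq_one (by simp [hc])) (mem_center_of_proj_eq_one (by simp [hb]))
  obtain ⟨z, hz, hlift⟩ := exists_mem_center_mul_eq (e := lift (f := f) (a ^ n))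
    (e' := lift a ^ n) (by simp)
  refine apply_eq_of_commute_lift (commute_lift_of_closure_eq_top hgen (fun y hy => ?_) x)
  rw [hlift]
  refine (hz.comm _).mul_left ?_
  rcases hy with rfl | rfl | rfl
  · exact (Commute.refl _).pow_left n
  · exact hab_n
  · exact hac_n

theorem apow_fRegular_of_group_x_general {p : ℕ} (hp : p.Prime) (hodd : Odd p)
    {G : Type*} [Group G] (a b c : G)
    (hgen : Subgroup.closure ({a, b, c} : Set G) = ⊤)
    (ha : orderOf a = p ^ 2) (hb : orderOf b = p) (hc : orderOf c = p)
    (hab : Commute a b) (hbc : Commute b c)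
    (hac : a * c * a⁻¹ * c⁻¹ = b) :
    (∀ f : G → G → ℂˣ, IsCocycle f → IsFRegular f (a ^ p)) ∧ ¬ IsCentralType G := by
  have hregular (f : G → G → ℂˣ) (hf : IsCocycle f) : IsFRegular f (a ^ p) := fun x _ =>
    hf.apply_pow_eq_of_odd hodd hgen (hb ▸ pow_orderOf_eq_one b) (hc ▸ pow_orderOf_eq_one c)
      hab hbc hac x
  refine ⟨hregular, fun ⟨f, hf, hnondeg⟩ => ?_⟩
  have hdvd : p ^ 2 ∣ p ^ 1 := by
    rw [← ha, pow_one]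
    exact orderOf_dvd_of_pow_eq_one (hnondeg _ (hregular f hf))
  exact absurd ((Nat.pow_dvd_pow_iff_le_right hp.one_lt).mp hdvd) (by norm_num)

/-- Let `G` be the group of order `p^4` (`p` an odd prime) generated by `a, b, c` with
relations `a^{p²} = b^p = c^p = 1`, `[a,b] = [b,c] = 1`, `[a,c] = b`.  Then for every
2-cocycle `f ∈ Z²(G, ℂ*)` the element `a^p` is `f`-regular; in particular `G` is not of
central type. -/
theorem apow_fRegular_of_group_x {p : ℕ} (hp : p.Prime) (hodd : Odd p)
    {G : Type*} [Group G] (a b c : G)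
    (hcard : Nat.card G = p ^ 4)
    (hgen : Subgroup.closure ({a, b, c} : Set G) = ⊤)
    (ha : orderOf a = p ^ 2) (hb : orderOf b = p) (hc : orderOf c = p)
    (hab : Commute a b) (hbc : Commute b c)
    (hac : a * c * a⁻¹ * c⁻¹ = b) :
    (∀ f : G → G → ℂˣ, IsCocycle f → IsFRegular f (a ^ p)) ∧ ¬ IsCentralType G :=
  apow_fRegular_of_group_x_general hp hodd a b c hgen ha hb hc hab hbc hac
end

section
/- Let G = ⟨a, b⟩ be the group of order 16 with a⁴ = b⁴ = 1 and b a b^{-1} = a^{-1} (equivalently [a,b] = a²). Then for every 2-cocycle f ∈ Z²(G, ℂ*), the element b² is f-regular; in particular G is not of central type. -/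
section

variable {G : Type*} [Group G]

/-- The paper's `α_f(g, x)`. -/
def cocycleAlpha (f : G → G → ℂˣ) (g x : G) : ℂˣ :=
  f g x / f x g

namespace IsCocycle

variable {f : G → G → ℂˣ}

theorem cocycleAlpha_mul (hf : IsCocycle f) {g x y : G} (hx : Commute g x) (hy : Commute g y) :
    cocycleAlpha f g (x * y) = cocycleAlpha f g x * cocycleAlpha f g y := by
  have h₁ := hf g x y
  have h₂ := hf x y g
  have h₃ := hf x g y
  rw [hx.eq] at h₁
  rw [← hy.eq] at h₂
  unfold cocycleAlpha
  rw [div_mul_div_comm, div_eq_div_iff_mul_eq_mul]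
  refine mul_left_cancel (a := f x y * f (x * g) y) ?_
  calc f x y * f (x * g) y * (f g (x * y) * (f x g * f y g))
      = f x y * f g (x * y) * (f x g * f (x * g) y) * f y g := by ac_rfl
    _ = f x y * f (x * y) g * (f (x * g) y * f g x * f g y) := by rw [← h₁, h₃, h₂]; ac_rfl
    _ = _ := by ac_rfl

theorem cocycleAlpha_mul_self (hf : IsCocycle f) (h : G) : cocycleAlpha f (h * h) h = 1 := by
  rw [cocycleAlpha, mul_left_cancel (hf h h h), div_self']

def cocycleAlphaHom (hf : IsCocycle f) {g : G} (hg : g ∈ Subgroup.center G) : G →* ℂˣ :=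
  MonoidHom.mk' (cocycleAlpha f g) fun x y ↦
    hf.cocycleAlpha_mul (Subgroup.mem_center_iff.mp hg x).symm (Subgroup.mem_center_iff.mp hg y).symm

theorem cocycleAlphaHom_apply (hf : IsCocycle f) {g : G} (hg : g ∈ Subgroup.center G) (x : G) :
    hf.cocycleAlphaHom hg x = cocycleAlpha f g x :=
  rfl

theorem isFRegular_of_mem_center (hf : IsCocycle f) {g : G} (hg : g ∈ Subgroup.center G)
    {s : Set G} (hs : Subgroup.closure s = ⊤) (hα : ∀ x ∈ s, cocycleAlpha f g x = 1) :
    IsFRegular f g := by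
  have hker : (hf.cocycleAlphaHom hg).ker = ⊤ :=
    top_le_iff.mp (hs ▸ (Subgroup.closure_le _).mpr hα)
  intro x _
  exact div_eq_one.mp (MonoidHom.mem_ker.mp (hker ▸ Subgroup.mem_top x))

end IsCocycle

section ConjEqInv

variable {a b : G}

theorem mul_mul_self_eq_of_conj_eq_inv (hba : b * a * b⁻¹ = a⁻¹) : a * b * (a * b) = b * b := by
  calc a * b * (a * b) = a * (b * a * b⁻¹) * (b * b) := by group
    _ = b * b := by rw [hba, mul_inv_cancel, one_mul]

theorem commute_mul_self_of_conj_eq_inv (hba : b * a * b⁻¹ = a⁻¹) : Commute (b * b) a := by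
  calc b * b * a = b * (b * a * b⁻¹) * b⁻¹ * (b * b) := by group
    _ = (b * a * b⁻¹)⁻¹ * (b * b) := by nth_rw 1 [hba]; group
    _ = a * (b * b) := by rw [hba, inv_inv]

end ConjEqInv

end

theorem bsq_fRegular_of_group16_viii_general {G : Type*} [Group G] (a b : G)
    (hgen : Subgroup.closure ({a, b} : Set G) = ⊤)
    (hb : orderOf b = 4)
    (hba : b * a * b⁻¹ = a⁻¹) :
    (∀ f : G → G → ℂˣ, IsCocycle f → IsFRegular f (b ^ 2)) ∧ ¬ IsCentralType G := by
  have hcenter : b * b ∈ Subgroup.center G := by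
    rw [← Subgroup.centralizer_univ, ← Subgroup.coe_top, ← hgen, Subgroup.centralizer_closure,
      Subgroup.mem_centralizer_iff]
    rintro x (rfl | rfl)
    · exact (commute_mul_self_of_conj_eq_inv hba).symm.eq
    · group
  have hregular (f : G → G → ℂˣ) (hf : IsCocycle f) : IsFRegular f (b ^ 2) := by
    have hαb : cocycleAlpha f (b * b) b = 1 := hf.cocycleAlpha_mul_self b
    have hαab : cocycleAlpha f (b * b) (a * b) = 1 := by
      rw [← mul_mul_self_eq_of_conj_eq_inv hba]; exact hf.cocycleAlpha_mul_self (a * b)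
    rw [pow_two]
    refine hf.isFRegular_of_mem_center hcenter hgen ?_
    rintro x (rfl | rfl)
    · rw [← mul_inv_cancel_right x b, ← hf.cocycleAlphaHom_apply hcenter, map_mul, map_inv,
        hf.cocycleAlphaHom_apply, hf.cocycleAlphaHom_apply, hαab, hαb, inv_one, mul_one]
    · exact hαb
  refine ⟨hregular, fun ⟨f, hf, hnondeg⟩ ↦ ?_⟩
  exact pow_ne_one_of_lt_orderOf two_ne_zero (by omega) (hnondeg _ (hregular f hf))

/-- Let `G = ⟨a, b⟩` be the group of order 16 with `a⁴ = b⁴ = 1` and `b a b⁻¹ = a⁻¹`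
(equivalently `[a,b] = a²`).  Then for every 2-cocycle `f ∈ Z²(G, ℂ*)` the element `b²` is
`f`-regular; in particular `G` is not of central type. -/
theorem bsq_fRegular_of_group16_viii {G : Type*} [Group G] (a b : G)
    (hcard : Nat.card G = 16)
    (hgen : Subgroup.closure ({a, b} : Set G) = ⊤)
    (ha : orderOf a = 4) (hb : orderOf b = 4)
    (hba : b * a * b⁻¹ = a⁻¹) :
    (∀ f : G → G → ℂˣ, IsCocycle f → IsFRegular f (b ^ 2)) ∧ ¬ IsCentralType G :=
  bsq_fRegular_of_group16_viii_general a b hgen hb hba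
end

section
/- Let G be a finite group of central type of order n², i.e., there exists a 2-cocycle f ∈ Z²(G, ℂ*) such that the twisted group algebra ℂ^f G is simple (isomorphic to M_n(ℂ)). Then every element of G has order at most n. -/
/-!
Left multiplication by `u_1` is onto, since it hits every `u_x` up to a unit; together with
`u_1 u_1 = f(1,1) u_1` this makes `u_1` a scalar. Hence the powers `u_g ^ k` are nonzero multiples of
the distinct basis vectors `u_{g^k}` for `k < orderOf g`, so they are linearly independent. By
Cayley–Hamilton the minimal polynomial of an `n × n` matrix has degree at most `n`, so at most `n`
of its powers can be linearly independent.
-/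

open Polynomial

theorem le_natDegree_minpoly_of_linearIndependent_pow {K S : Type*} [Field K] [Ring S]
    [Algebra K S] {x : S} (hx : IsIntegral K x) {m : ℕ}
    (hli : LinearIndependent K fun i : Fin m => x ^ (i : ℕ)) : m ≤ (minpoly K x).natDegree := by
  set low := Submodule.span K (Set.range fun i : Fin (minpoly K x).natDegree => x ^ (i : ℕ))
  have : Module.Finite K low := Module.Finite.span_of_finite K (Set.finite_range _)
  have hle : Submodule.span K (Set.range fun i : Fin m => x ^ (i : ℕ)) ≤ low := by
    rw [Submodule.span_le]
    rintro _ ⟨i, rfl⟩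
    exact hx.mem_span_pow ⟨X ^ (i : ℕ), by simp⟩
  calc m = Module.finrank K (Submodule.span K (Set.range fun i : Fin m => x ^ (i : ℕ))) := by
        rw [finrank_span_eq_card hli, Fintype.card_fin]
    _ ≤ Module.finrank K low := Submodule.finrank_mono hle
    _ ≤ (minpoly K x).natDegree := (finrank_range_le_card _).trans_eq (Fintype.card_fin _)

theorem Matrix.natDegree_minpoly_le {K n : Type*} [Field K] [Fintype n] [DecidableEq n]
    (M : Matrix n n K) : (minpoly K M).natDegree ≤ Fintype.card n := by
  simpa using natDegree_le_of_dvd M.minpoly_dvd_charpoly M.charpoly_monic.ne_zero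

def IsTwistedBasis {K A G : Type*} [CommRing K] [Ring A] [Algebra K A] [Monoid G]
    (f : G → G → Kˣ) (b : Module.Basis G K A) : Prop :=
  ∀ x y : G, b x * b y = (f x y : K) • b (x * y)

namespace IsTwistedBasis

variable {K A G : Type*} [CommRing K] [Ring A] [Algebra K A] [Monoid G]
  {f : G → G → Kˣ} {b : Module.Basis G K A}

theorem exists_mul_eq_one (hb : IsTwistedBasis f b) : ∃ s : A, b 1 * s = 1 := by
  have hsurj : LinearMap.range (LinearMap.mulLeft K (b 1)) = ⊤ := by
    rw [eq_top_iff, ← b.span_eq, Submodule.span_le]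
    rintro _ ⟨x, rfl⟩
    refine ⟨((f 1 x)⁻¹ : Kˣ) • b x, ?_⟩
    rw [LinearMap.mulLeft_apply, mul_smul_comm, hb, one_mul]
    simp [Units.smul_def, smul_smul]
  exact LinearMap.range_eq_top.mp hsurj 1

theorem apply_one (hb : IsTwistedBasis f b) : b 1 = (f 1 1 : K) • 1 := by
  obtain ⟨s, hs⟩ := hb.exists_mul_eq_one
  calc b 1 = b 1 * b 1 * s := by rw [mul_assoc, hs, mul_one]
    _ = (f 1 1 : K) • 1 := by rw [hb, one_mul, smul_mul_assoc, hs]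

theorem exists_pow_eq_smul (hb : IsTwistedBasis f b) (g : G) (k : ℕ) :
    ∃ c : Kˣ, b g ^ k = (c : K) • b (g ^ k) := by
  induction k with
  | zero => exact ⟨(f 1 1)⁻¹, by simp [hb.apply_one, smul_smul]⟩
  | succ k ih =>
    obtain ⟨c, hc⟩ := ih
    refine ⟨c * f (g ^ k) g, ?_⟩
    rw [pow_succ, hc, smul_mul_assoc, hb, smul_smul, pow_succ, Units.val_mul]

theorem linearIndependent_pow (hb : IsTwistedBasis f b) (g : G) :
    LinearIndependent K fun k : Fin (orderOf g) => b g ^ (k : ℕ) := by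
  choose c hc using hb.exists_pow_eq_smul g
  have hinj : Function.Injective fun k : Fin (orderOf g) => g ^ (k : ℕ) :=
    fun i j hij => Fin.ext (pow_injOn_Iio_orderOf i.2 j.2 hij)
  convert (b.linearIndependent.comp _ hinj).units_smul fun k => c k with k
  exact hc k

end IsTwistedBasis

theorem orderOf_le_of_central_type_general {G : Type*} [Group G] {n : ℕ}
    (f : G → G → ℂˣ)
    (b : Module.Basis G ℂ (Matrix (Fin n) (Fin n) ℂ))
    (hmul : ∀ x y : G, (b x) * (b y) = (f x y : ℂ) • b (x * y))
    (g : G) : orderOf g ≤ n := by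
  have hb : IsTwistedBasis f b := hmul
  calc orderOf g ≤ (minpoly ℂ (b g)).natDegree :=
        le_natDegree_minpoly_of_linearIndependent_pow (Matrix.isIntegral _)
          (hb.linearIndependent_pow g)
    _ ≤ n := by simpa using (b g).natDegree_minpoly_le

/-- Let `G` be a finite group of central type of order `n²`, i.e. there is a 2-cocycle
`f ∈ Z²(G, ℂ*)` such that the twisted group algebra `ℂ^f G` is simple, isomorphic to
`M_n(ℂ)` (realized here by a basis `{u_g}` of `M_n(ℂ)` with `u_x u_y = f(x,y) u_{xy}`).
Then every element of `G` has order at most `n`. -/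
theorem orderOf_le_of_central_type {G : Type*} [Group G] [Finite G] {n : ℕ}
    (hcard : Nat.card G = n ^ 2)
    (f : G → G → ℂˣ) (hf : IsCocycle f)
    (b : Module.Basis G ℂ (Matrix (Fin n) (Fin n) ℂ))
    (hmul : ∀ x y : G, (b x) * (b y) = (f x y : ℂ) • b (x * y))
    (g : G) : orderOf g ≤ n :=
  orderOf_le_of_central_type_general f b hmul g
end
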